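/- arXiv:0803.0025 — 3 statements merged into one kernel-verified Lean document; each statement's English description precedes it below -/
import Mathlib

section
/- Suppose n ≥ 2 or τ ≠ 0. If Ψ, Φ ∈ ℂ² ⊗ ℂⁿ satisfy μ_{0,τ}(Ψ,Φ) = 0, where μ_{0,τ}(Ψ,Φ) = P(ΨΦ*) + τQ(ΨΦ*), then Ψ = 0 or Φ = 0. -/
open scoped ComplexConjugate

noncomputable section

/-- `Gl k` models `gl(ℂ² ⊗ ℂᵏ)`, endomorphisms of `ℂ² ⊗ ℂᵏ` in the standard basis. -/
abbrev Gl (k : ℕ) := Matrix (Fin 2 × Fin k) (Fin 2 × Fin k) ℂ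

/-- The rank-one endomorphism `ΨΦ* : Ξ ↦ Ψ⟨Φ,Ξ⟩` of `ℂ² ⊗ ℂᵏ`. -/
def outer (k : ℕ) (Ψ Φ : Fin 2 × Fin k → ℂ) : Gl k :=
  Matrix.of fun x y => Ψ x * conj (Φ y)

/-- Partial trace over the `ℂᵏ`-factor, with values in `gl(ℂ²)`. -/
def ptr2 (k : ℕ) (a : Gl k) : Matrix (Fin 2) (Fin 2) ℂ :=
  Matrix.of fun i i' => ∑ j : Fin k, a (i, j) (i', j)

/-- Partial trace over the `ℂ²`-factor, with values in `gl(ℂᵏ)`. -/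
def ptr1 (k : ℕ) (a : Gl k) : Matrix (Fin k) (Fin k) ℂ :=
  Matrix.of fun j j' => ∑ i : Fin 2, a (i, j) (i, j')

/-- Orthogonal projection of `gl(ℂ²⊗ℂᵏ)` onto `sl(ℂ²) ⊗ ℂ·id` (Frobenius inner product):
`Q(a) = [(1/k)·(tr₂ a − (tr a / 2)·id₂)] ⊗ id_k`. -/
def Qproj (k : ℕ) (a : Gl k) : Gl k :=
  Matrix.of fun x y =>
    (1 / (k : ℂ)) * (ptr2 k a x.1 y.1 - (ptr2 k a).trace / 2 * (if x.1 = y.1 then 1 else 0)) *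
      (if x.2 = y.2 then 1 else 0)

/-- Orthogonal projection of `gl(ℂ²⊗ℂᵏ)` onto `ℂ·id ⊗ sl(ℂᵏ)`. -/
def Rproj (k : ℕ) (a : Gl k) : Gl k :=
  Matrix.of fun x y =>
    (if x.1 = y.1 then 1 else 0) *
      ((1 / 2 : ℂ) * (ptr1 k a x.2 y.2 - (ptr1 k a).trace / (k : ℂ) * (if x.2 = y.2 then 1 else 0)))

/-- Orthogonal projection of `gl(ℂ²⊗ℂᵏ)` onto `ℂ·id ⊗ ℂ·id`. -/
def Sproj (k : ℕ) (a : Gl k) : Gl k :=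
  Matrix.of fun x y => (a.trace / (2 * (k : ℂ))) * (if x = y then 1 else 0)

/-- Orthogonal projection `P` of `gl(ℂ²⊗ℂᵏ)` onto `sl(ℂ²) ⊗ sl(ℂᵏ)`. -/
def Pproj (k : ℕ) (a : Gl k) : Gl k := a - Qproj k a - Rproj k a - Sproj k a

/-- The bilinear map `μ_{0,τ}(Ψ,Φ) = P(ΨΦ*) + τ·Q(ΨΦ*)`. -/
def muBil (k : ℕ) (τ : ℝ) (Ψ Φ : Fin 2 × Fin k → ℂ) : Gl k :=
  Pproj k (outer k Ψ Φ) + (τ : ℂ) • Qproj k (outer k Ψ Φ)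

/-- The quadratic map `μ_{0,τ}(Ψ) = μ_{0,τ}(Ψ,Ψ)`. -/
def muQ (k : ℕ) (τ : ℝ) (Ψ : Fin 2 × Fin k → ℂ) : Gl k := muBil k τ Ψ Ψ

/-- Squared Frobenius norm of a matrix. -/
def frobSq {α β : Type*} [Fintype α] [Fintype β] (M : Matrix α β ℂ) : ℝ :=
  ∑ x, ∑ y, ‖M x y‖ ^ 2

/-- Frobenius norm of a matrix. -/
def frobNorm {α β : Type*} [Fintype α] [Fintype β] (M : Matrix α β ℂ) : ℝ :=
  Real.sqrt (frobSq M)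

/-- Squared Hermitian norm `|Ψ|²` of a vector. -/
def vnormSq {α : Type*} [Fintype α] (Ψ : α → ℂ) : ℝ := ∑ x, ‖Ψ x‖ ^ 2

/-! If `μ_{0,τ}(Ψ,Φ) = 0`, the rank-one matrix `M = ΨΦ*` equals
`(1-τ) Qproj M + Rproj M + Sproj M`, so it has the form `A ⊗ 1 + 1 ⊗ B`. For `n ≥ 2` a rank-one
matrix of this form vanishes: its `2 × 2` minors `M_{xy} M_{x'y'} - M_{xy'} M_{x'y}` vanish, which
kills first the off-diagonal entries of `A` and `B` and then the diagonal `A_{ii} + B_{jj}`.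
For `n = 1` the projection `Rproj` is zero and the equation reads `τ (M - (tr M / 2) • 1) = 0`,
so for `τ ≠ 0` the matrix `M` is scalar, hence zero. -/

open Matrix Kronecker

section RankOne

variable {R ι κ : Type*} [CommRing R] [NoZeroDivisors R] [DecidableEq ι] [DecidableEq κ]

theorem vecMulVec_eq_zero_of_eq_smul_one [Nontrivial ι] {u v : ι → R} {c : R}
    (h : vecMulVec u v = c • 1) : vecMulVec u v = 0 := by
  have h' : ∀ x y, u x * v y = c * (1 : Matrix ι ι R) x y := fun x y => congr($h x y)
  have hoff : ∀ {x y}, x ≠ y → u x * v y = 0 := fun hxy => by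
    rw [h', one_apply_ne hxy, mul_zero]
  ext x y
  rw [vecMulVec_apply, Matrix.zero_apply]
  rcases eq_or_ne x y with rfl | hxy
  · obtain ⟨y, hyx⟩ := exists_ne x
    have hx := h' x x
    have hy := h' y y
    rw [one_apply_eq] at hx hy
    have : (u x * v x) * (u x * v x) = 0 := by
      linear_combination (u x * v x) * (hx - hy) + (u y * v x) * hoff hyx.symm
    exact mul_self_eq_zero.mp this
  · exact hoff hxy

variable [Nontrivial κ] {u v : ι × κ → R} {A : Matrix ι ι R} {B : Matrix κ κ R}

theorem mul_eq_zero_of_fst_ne_of_kronecker_sum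
    (h : ∀ i i' j j', u (i, j) * v (i', j') = A i i' * (1 : Matrix κ κ R) j j' +
      (1 : Matrix ι ι R) i i' * B j j')
    {i i' : ι} (hi : i ≠ i') (j j' : κ) : u (i, j) * v (i', j') = 0 := by
  have hoff : ∀ {j j'}, j ≠ j' → u (i, j) * v (i', j') = 0 := fun hj => by
    rw [h, one_apply_ne hi, one_apply_ne hj, mul_zero, zero_mul, add_zero]
  have hdiag : ∀ j, u (i, j) * v (i', j) = A i i' := fun j => by
    rw [h, one_apply_ne hi, one_apply_eq, mul_one, zero_mul, add_zero]
  obtain ⟨k, hk⟩ := exists_ne j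
  have hA : A i i' * A i i' = 0 := by
    linear_combination (u (i, k) * v (i', j)) * hoff hk.symm - (u (i, k) * v (i', k)) * hdiag j
      - A i i' * hdiag k
  rcases eq_or_ne j j' with rfl | hj
  · rw [hdiag, mul_self_eq_zero.mp hA]
  · exact hoff hj

variable [Nontrivial ι]

theorem vecMulVec_eq_zero_of_eq_kronecker_sum (h : vecMulVec u v = A ⊗ₖ 1 + 1 ⊗ₖ B) :
    vecMulVec u v = 0 := by
  have h' : ∀ i i' j j', u (i, j) * v (i', j') = A i i' * (1 : Matrix κ κ R) j j' +
      (1 : Matrix ι ι R) i i' * B j j' := fun i i' j j' => congr($h (i, j) (i', j'))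
  have hfst : ∀ {i i'}, i ≠ i' → ∀ j j', u (i, j) * v (i', j') = 0 :=
    mul_eq_zero_of_fst_ne_of_kronecker_sum h'
  have hsnd : ∀ i {j j'}, j ≠ j' → u (i, j) * v (i, j') = 0 := fun i j j' hj =>
    mul_eq_zero_of_fst_ne_of_kronecker_sum (u := fun p => u p.swap) (v := fun p => v p.swap)
      (A := B) (B := A) (fun j j' i i' => by simp only [Prod.swap_prod_mk, h']; ring) hj i i
  ext ⟨i, j⟩ ⟨i', j'⟩
  rw [vecMulVec_apply, Matrix.zero_apply]
  rcases eq_or_ne i i' with rfl | hi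
  · rcases eq_or_ne j j' with rfl | hj
    · obtain ⟨i', hi⟩ := exists_ne i
      obtain ⟨j', hj⟩ := exists_ne j
      have hd := fun i j => h' i i j j
      simp only [one_apply_eq, mul_one, one_mul] at hd
      -- the diagonal `A i i + B j j` is additive on the square `{i, i'} × {j, j'}`, while
      -- distinct diagonal entries of a rank-one matrix have product zero
      have : (u (i, j) * v (i, j)) * (u (i, j) * v (i, j)) = 0 := by
        linear_combination (u (i, j) * v (i, j)) * (hd i j - hd i j' - hd i' j + hd i' j')
          + (u (i, j') * v (i, j)) * hsnd i hj.symm + (u (i', j) * v (i, j)) * hfst hi.symm j j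
          - (u (i', j') * v (i, j)) * hfst hi.symm j j'
      exact mul_self_eq_zero.mp this
    · exact hsnd i hj
  · exact hfst hi j j'

end RankOne

theorem eq_kronecker_sum_of_Pproj_add_smul_Qproj_eq_zero {k : ℕ} {τ : ℂ} {a : Gl k}
    (h : Pproj k a + τ • Qproj k a = 0) :
    ∃ (A : Matrix (Fin 2) (Fin 2) ℂ) (B : Matrix (Fin k) (Fin k) ℂ), a = A ⊗ₖ 1 + 1 ⊗ₖ B := by
  have ha : a = (1 - τ) • Qproj k a + Rproj k a + Sproj k a := by
    rw [Pproj] at h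
    linear_combination (norm := module) h
  refine ⟨((1 - τ) / k) • (ptr2 k a - ((ptr2 k a).trace / 2) • 1) + (a.trace / (2 * k)) • 1,
    (1 / 2 : ℂ) • (ptr1 k a - ((ptr1 k a).trace / k) • 1), ha.trans ?_⟩
  ext ⟨i, j⟩ ⟨i', j'⟩
  simp only [Qproj, Rproj, Sproj, Matrix.add_apply, Matrix.smul_apply, of_apply, kronecker_apply,
    Matrix.sub_apply, one_apply, Prod.mk.injEq, smul_eq_mul]
  split_ifs <;> first | tauto | ring

theorem Pproj_one_add_smul_Qproj_one (τ : ℂ) (a : Gl 1) :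
    Pproj 1 a + τ • Qproj 1 a = τ • (a - (a.trace / 2) • 1) := by
  ext ⟨i, j⟩ ⟨i', j'⟩
  obtain rfl : j = 0 := Subsingleton.elim _ _
  obtain rfl : j' = 0 := Subsingleton.elim _ _
  simp [Pproj, Qproj, Rproj, Sproj, ptr1, ptr2, trace, one_apply, Fin.sum_univ_two,
    Fintype.sum_prod_type]

theorem outer_eq_vecMulVec (k : ℕ) (Ψ Φ : Fin 2 × Fin k → ℂ) :
    outer k Ψ Φ = vecMulVec Ψ (star Φ) := rfl

theorem stmt_5_general (n : ℕ) (τ : ℝ) (h : 2 ≤ n ∨ τ ≠ 0)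
    (Ψ Φ : Fin 2 × Fin n → ℂ) (hzero : muBil n τ Ψ Φ = 0) :
    Ψ = 0 ∨ Φ = 0 := by
  rw [← star_eq_zero (x := Φ), ← vecMulVec_eq_zero, ← outer_eq_vecMulVec]
  by_cases hn : 2 ≤ n
  · have : Nontrivial (Fin n) := Fin.nontrivial_iff_two_le.mpr hn
    obtain ⟨A, B, hAB⟩ := eq_kronecker_sum_of_Pproj_add_smul_Qproj_eq_zero hzero
    exact vecMulVec_eq_zero_of_eq_kronecker_sum hAB
  obtain rfl | rfl : n = 0 ∨ n = 1 := by omega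
  · exact Subsingleton.elim _ _
  · have hτ : (τ : ℂ) ≠ 0 := by exact_mod_cast h.resolve_left hn
    rw [muBil, Pproj_one_add_smul_Qproj_one, smul_eq_zero_iff_right hτ, sub_eq_zero] at hzero
    exact vecMulVec_eq_zero_of_eq_smul_one hzero

/-- `μ_{0,τ}` has no zero divisors: if `n ≥ 2` or `τ ≠ 0` (with `τ ∈ [0,1]`) and
`μ_{0,τ}(Ψ,Φ) = 0`, then `Ψ = 0` or `Φ = 0`. -/
theorem stmt_5 (n : ℕ) (τ : ℝ) (hτ : τ ∈ Set.Icc (0 : ℝ) 1) (h : 2 ≤ n ∨ τ ≠ 0)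
    (Ψ Φ : Fin 2 × Fin n → ℂ) (hzero : muBil n τ Ψ Φ = 0) :
    Ψ = 0 ∨ Φ = 0 :=
  stmt_5_general n τ h Ψ Φ hzero
end
end

section
/- Suppose μ : V × V → W is a complex-bilinear (or sesquilinear) map without zero divisors, i.e. μ(Ψ,Φ) = 0 implies Ψ = 0 or Φ = 0. Let X be a connected topological space and Ψ₁, Ψ₂ : X → V continuous functions such that μ(Ψ₁(x), Ψ₂(x)) = 0 for all x, and suppose each Ψᵢ satisfies the unique continuation property (if it vanishes on a nonempty open set it vanishes identically). Then Ψ₁ ≡ 0 or Ψ₂ ≡ 0. -/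
theorem forall_eq_zero_of_forall_or_eq_zero {X M N : Type*} [TopologicalSpace X] [Zero M]
    [Zero N] [TopologicalSpace N] [T1Space N] {f : X → M} {g : X → N} (hg : Continuous g)
    (hfg : ∀ x, f x = 0 ∨ g x = 0)
    (hucp : ∀ U : Set X, IsOpen U → U.Nonempty → (∀ x ∈ U, f x = 0) → ∀ x, f x = 0)
    (hg_ne : ∃ x, g x ≠ 0) : ∀ x, f x = 0 :=
  hucp (Function.support g) hg.isOpen_support hg_ne fun x hx => (hfg x).resolve_right hx

theorem stmt_17_general {V W : Type*} [NormedAddCommGroup V] [NormedSpace ℂ V]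
    [AddCommGroup W] [Module ℂ W] (μ : V →ₗ[ℂ] V →ₗ[ℂ] W)
    (hnzd : ∀ Ψ Φ : V, μ Ψ Φ = 0 → Ψ = 0 ∨ Φ = 0)
    {X : Type*} [TopologicalSpace X]
    (Ψ₁ Ψ₂ : X → V) (hc₂ : Continuous Ψ₂)
    (hμ : ∀ x : X, μ (Ψ₁ x) (Ψ₂ x) = 0)
    (hucp₁ : ∀ U : Set X, IsOpen U → U.Nonempty → (∀ x ∈ U, Ψ₁ x = 0) → ∀ x, Ψ₁ x = 0) :
    (∀ x, Ψ₁ x = 0) ∨ (∀ x, Ψ₂ x = 0) :=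
  or_iff_not_imp_right.2 fun hΨ₂ =>
    forall_eq_zero_of_forall_or_eq_zero hc₂ (fun x => hnzd _ _ (hμ x)) hucp₁ (not_forall.1 hΨ₂)

/-- Let `μ : V × V → W` be a bilinear map without zero divisors, `X` a connected space and
`Ψ₁, Ψ₂ : X → V` continuous with `μ(Ψ₁(x), Ψ₂(x)) = 0` for all `x`.  If each `Ψᵢ` has the
unique continuation property (vanishing on a nonempty open set forces identical vanishing),
then `Ψ₁ ≡ 0` or `Ψ₂ ≡ 0`. -/
theorem stmt_17 {V W : Type*} [NormedAddCommGroup V] [NormedSpace ℂ V]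
    [AddCommGroup W] [Module ℂ W] (μ : V →ₗ[ℂ] V →ₗ[ℂ] W)
    (hnzd : ∀ Ψ Φ : V, μ Ψ Φ = 0 → Ψ = 0 ∨ Φ = 0)
    {X : Type*} [TopologicalSpace X] [ConnectedSpace X]
    (Ψ₁ Ψ₂ : X → V) (hc₁ : Continuous Ψ₁) (hc₂ : Continuous Ψ₂)
    (hμ : ∀ x : X, μ (Ψ₁ x) (Ψ₂ x) = 0)
    (hucp₁ : ∀ U : Set X, IsOpen U → U.Nonempty → (∀ x ∈ U, Ψ₁ x = 0) → ∀ x, Ψ₁ x = 0)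
    (hucp₂ : ∀ U : Set X, IsOpen U → U.Nonempty → (∀ x ∈ U, Ψ₂ x = 0) → ∀ x, Ψ₂ x = 0) :
    (∀ x, Ψ₁ x = 0) ∨ (∀ x, Ψ₂ x = 0) :=
  stmt_17_general μ hnzd Ψ₁ Ψ₂ hc₂ hμ hucp₁
end

section
/- Let Ψ ∈ ℂ² ⊗ ℂ^N and suppose Ψ ∈ ℂ² ⊗ F for a subspace F ⊆ ℂ^N of dimension n. Then with respect to the orthogonal decomposition ℂ^N = F ⊕ F⊥, the endomorphism μ_{0,0}(Ψ) = P(ΨΨ*) is block diagonal: its F-block equals μ^F_{0,1−n/N}(Ψ) and its F⊥-block equals −(1/N)·tr(μ^F_{0,1}(Ψ))·id_{F⊥}, where μ^F_{0,τ} denotes the map μ_{0,τ} formed inside ℂ² ⊗ F, and the trace is taken in the F-factor. -/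
/-!
Since `R + S = ½·id₂ ⊗ tr₂`, the projection is `P(a) = a − Q(a) − ½·id₂ ⊗ tr₂(a)`, where only
`Q(a) = (1/k)·(tr_k a − ½ tr a·id₂) ⊗ id_k` depends on the dimension `k`. For `a = ΨΨ*` supported
in `ℂ² ⊗ F`, both partial traces of `a` are those of its restriction to `ℂ² ⊗ F`. On the
`F`-block the `Q`-term of `P_N` is therefore `n/N` times that of `P_F`, which gives
`τ = 1 − n/N`; off the `F`-block only `−Q_N(a)` survives, which is diagonal in `ℂᴺ` and, since
`tr_F P_F = 0`, equals `−(1/N)·tr_F μ^F_{0,1}(Ψ) ⊗ id`.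
-/

open scoped ComplexConjugate

noncomputable section

open Matrix Kronecker

section PartialTrace

variable {k : ℕ}

lemma trace_ptr1 (a : Gl k) : (ptr1 k a).trace = a.trace := by
  simp only [Matrix.trace, Matrix.diag, ptr1, Matrix.of_apply, Fintype.sum_prod_type]
  exact Finset.sum_comm

lemma trace_ptr2 (a : Gl k) : (ptr2 k a).trace = a.trace := by
  simp only [Matrix.trace, Matrix.diag, ptr2, Matrix.of_apply, Fintype.sum_prod_type]

lemma ptr2_add (a b : Gl k) : ptr2 k (a + b) = ptr2 k a + ptr2 k b := by
  ext i i'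
  simp [ptr2, Finset.sum_add_distrib]

lemma ptr2_sub (a b : Gl k) : ptr2 k (a - b) = ptr2 k a - ptr2 k b := by
  ext i i'
  simp [ptr2, Finset.sum_sub_distrib]

lemma ptr2_smul (c : ℂ) (a : Gl k) : ptr2 k (c • a) = c • ptr2 k a := by
  ext i i'
  simp [ptr2, Finset.mul_sum]

lemma ptr2_kronecker (b : Matrix (Fin 2) (Fin 2) ℂ) (c : Matrix (Fin k) (Fin k) ℂ) :
    ptr2 k (b ⊗ₖ c) = c.trace • b := by
  ext i i'
  simp [ptr2, Matrix.trace, Finset.mul_sum, mul_comm]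

end PartialTrace

section Projections

variable {k : ℕ}

lemma Qproj_eq_kronecker (a : Gl k) :
    Qproj k a = ((k : ℂ)⁻¹ • (ptr2 k a - ((ptr2 k a).trace / 2) • 1)) ⊗ₖ 1 := by
  ext x y
  simp [Qproj, Matrix.one_apply, div_eq_inv_mul]

-- The `tr a / k` terms of `R` and `S` cancel.
lemma Rproj_add_Sproj (a : Gl k) :
    Rproj k a + Sproj k a = (1 / 2 : ℂ) • ((1 : Matrix (Fin 2) (Fin 2) ℂ) ⊗ₖ ptr1 k a) := by
  ext ⟨i, j⟩ ⟨i', j'⟩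
  simp only [Rproj, Sproj, ← trace_ptr1 a]
  by_cases hi : i = i' <;> by_cases hj : j = j' <;> simp [hi, hj]
  ring

lemma Pproj_eq (a : Gl k) :
    Pproj k a = a - Qproj k a - (1 / 2 : ℂ) • ((1 : Matrix (Fin 2) (Fin 2) ℂ) ⊗ₖ ptr1 k a) := by
  rw [Pproj, sub_sub _ (Rproj k a), Rproj_add_Sproj]

lemma ptr2_Qproj (hk : k ≠ 0) (a : Gl k) :
    ptr2 k (Qproj k a) = ptr2 k a - (a.trace / 2) • 1 := by
  have hk' : (k : ℂ) ≠ 0 := Nat.cast_ne_zero.mpr hk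
  rw [Qproj_eq_kronecker, ptr2_kronecker, trace_ptr2, Matrix.trace_one]
  simp [smul_smul, hk']

lemma ptr2_Pproj (hk : k ≠ 0) (a : Gl k) : ptr2 k (Pproj k a) = 0 := by
  rw [Pproj_eq, ptr2_sub, ptr2_sub, ptr2_Qproj hk, ptr2_smul, ptr2_kronecker, trace_ptr1]
  ext i i'
  simp [Matrix.smul_apply]
  ring

end Projections

section ZeroExtension

variable {n N : ℕ} (h : n ≤ N)

structure IsZeroExtension (a : Gl N) (a' : Gl n) : Prop where
  apply_castLE : ∀ (i i' : Fin 2) (j j' : Fin n),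
    a (i, Fin.castLE h j) (i', Fin.castLE h j') = a' (i, j) (i', j')
  apply_eq_zero : ∀ (i i' : Fin 2) (j j' : Fin N), (n ≤ (j : ℕ) ∨ n ≤ (j' : ℕ)) →
    a (i, j) (i', j') = 0

lemma Fin.sum_castLE_of_eq_zero {M : Type*} [AddCommMonoid M] (f : Fin N → M)
    (hf : ∀ j : Fin N, n ≤ (j : ℕ) → f j = 0) :
    ∑ j : Fin n, f (Fin.castLE h j) = ∑ j : Fin N, f j :=
  Fintype.sum_of_injective _ (Fin.castLE_injective h) _ _
    (fun j hj => hf j (not_lt.mp fun hlt => hj ⟨⟨j, hlt⟩, rfl⟩)) fun _ => rfl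

lemma isZeroExtension_outer {Ψ : Fin 2 × Fin N → ℂ}
    (hΨ : ∀ (i : Fin 2) (j : Fin N), n ≤ (j : ℕ) → Ψ (i, j) = 0) :
    IsZeroExtension h (outer N Ψ Ψ) (outer n (fun p => Ψ (p.1, Fin.castLE h p.2))
      fun p => Ψ (p.1, Fin.castLE h p.2)) where
  apply_castLE _ _ _ _ := rfl
  apply_eq_zero i i' j j' hjj' := by
    rcases hjj' with hj | hj' <;> simp [outer, *]

namespace IsZeroExtension

variable {h} {a : Gl N} {a' : Gl n}

lemma ptr2_eq (ha : IsZeroExtension h a a') : ptr2 N a = ptr2 n a' := by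
  ext i i'
  simp only [ptr2, Matrix.of_apply, ← ha.apply_castLE]
  exact (Fin.sum_castLE_of_eq_zero h _ fun j hj => ha.apply_eq_zero _ _ _ _ (.inl hj)).symm

lemma ptr1_castLE (ha : IsZeroExtension h a a') (j j' : Fin n) :
    ptr1 N a (Fin.castLE h j) (Fin.castLE h j') = ptr1 n a' j j' := by
  simp [ptr1, ha.apply_castLE]

lemma ptr1_eq_zero (ha : IsZeroExtension h a a') {j j' : Fin N}
    (hjj' : n ≤ (j : ℕ) ∨ n ≤ (j' : ℕ)) : ptr1 N a j j' = 0 := by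
  simp [ptr1, ha.apply_eq_zero _ _ _ _ hjj']

lemma Qproj_castLE (ha : IsZeroExtension h a a') (hn : n ≠ 0) (i i' : Fin 2) (j j' : Fin n) :
    Qproj N a (i, Fin.castLE h j) (i', Fin.castLE h j') =
      (n / N : ℂ) * Qproj n a' (i, j) (i', j') := by
  have hn' : (n : ℂ) ≠ 0 := Nat.cast_ne_zero.mpr hn
  simp only [Qproj, Matrix.of_apply, ha.ptr2_eq, Fin.castLE_inj]
  field_simp

lemma Pproj_castLE (ha : IsZeroExtension h a a') (hn : n ≠ 0) (i i' : Fin 2) (j j' : Fin n) :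
    Pproj N a (i, Fin.castLE h j) (i', Fin.castLE h j') =
      (Pproj n a' + ((1 - (n : ℝ) / N : ℝ) : ℂ) • Qproj n a') (i, j) (i', j') := by
  rw [Pproj_eq, Pproj_eq]
  simp only [Matrix.add_apply, Matrix.sub_apply, ha.Qproj_castLE hn]
  simp [ha.apply_castLE, ha.ptr1_castLE]
  ring

lemma Pproj_apply_of_le (ha : IsZeroExtension h a a') (i i' : Fin 2) {j j' : Fin N}
    (hjj' : n ≤ (j : ℕ) ∨ n ≤ (j' : ℕ)) :
    Pproj N a (i, j) (i', j') = -Qproj N a (i, j) (i', j') := by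
  rw [Pproj_eq]
  simp [ha.apply_eq_zero _ _ _ _ hjj', ha.ptr1_eq_zero hjj']

end IsZeroExtension

end ZeroExtension

/-- Let `Ψ ∈ ℂ² ⊗ ℂᴺ` be supported in `ℂ² ⊗ F`, where `F ⊆ ℂᴺ` is the span of the first
`n` coordinates.  Then, with respect to `ℂᴺ = F ⊕ F^⊥`, the endomorphism
`μ_{0,0}(Ψ) = P(ΨΨ*)` is block diagonal; its `F`-block equals `μ^F_{0,1-n/N}(Ψ)` and its
`F^⊥`-block equals `-(1/N)·tr_F(μ^F_{0,1}(Ψ)) ⊗ id_{F^⊥}`, the trace being taken in the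
`F`-factor. -/
theorem stmt_19 (n N : ℕ) (hn : 0 < n) (hnN : n < N) (Ψ : Fin 2 × Fin N → ℂ)
    (hsupp : ∀ (i : Fin 2) (j : Fin N), n ≤ (j : ℕ) → Ψ (i, j) = 0) :
    -- `Ψ'` is `Ψ` viewed as an element of `ℂ² ⊗ F ≅ ℂ² ⊗ ℂⁿ`
    ∀ Ψ' : Fin 2 × Fin n → ℂ, (Ψ' = fun p => Ψ (p.1, Fin.castLE hnN.le p.2)) →
    -- off-diagonal blocks vanish
    (∀ (i i' : Fin 2) (j j' : Fin N), ((j : ℕ) < n ↔ ¬ (j' : ℕ) < n) →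
      muQ N 0 Ψ (i, j) (i', j') = 0) ∧
    -- the `F`-block is `μ^F_{0,1-n/N}(Ψ')`
    (∀ (i i' : Fin 2) (j j' : Fin n),
      muQ N 0 Ψ (i, Fin.castLE hnN.le j) (i', Fin.castLE hnN.le j') =
        muQ n (1 - (n : ℝ) / (N : ℝ)) Ψ' (i, j) (i', j')) ∧
    -- the `F^⊥`-block is `-(1/N)·tr_F(μ^F_{0,1}(Ψ'))·id_{F^⊥}`
    (∀ (i i' : Fin 2) (j j' : Fin N), n ≤ (j : ℕ) → n ≤ (j' : ℕ) →
      muQ N 0 Ψ (i, j) (i', j') =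
        (if j = j' then 1 else 0) *
          (-(1 / (N : ℂ)) * ∑ j'' : Fin n, muQ n 1 Ψ' (i, j'') (i', j''))) := by
  intro Ψ' hΨ'
  have ha : IsZeroExtension hnN.le (outer N Ψ Ψ) (outer n Ψ' Ψ') :=
    hΨ' ▸ isZeroExtension_outer hnN.le hsupp
  have hQ (i i' : Fin 2) {j j' : Fin N} : Qproj N (outer N Ψ Ψ) (i, j) (i', j') =
      (if j = j' then 1 else 0) * (1 / (N : ℂ)) * ptr2 n (muQ n 1 Ψ') i i' := by
    rw [muQ, muBil, Complex.ofReal_one, one_smul, ptr2_add, ptr2_Pproj hn.ne',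
      ptr2_Qproj hn.ne', ← trace_ptr2, ← ha.ptr2_eq]
    simp [Qproj, Matrix.one_apply]
  refine ⟨fun i i' j j' hjj' => ?_, fun i i' j j' => ?_, fun i i' j j' hj hj' => ?_⟩
  · have hne : j ≠ j' := by rintro rfl; exact iff_not_self hjj'
    have hle : n ≤ (j : ℕ) ∨ n ≤ (j' : ℕ) := by omega
    simp [muQ, muBil, ha.Pproj_apply_of_le i i' hle, hQ, hne]
  · simpa [muQ, muBil] using ha.Pproj_castLE hn.ne' i i' j j'
  · rw [muQ, muBil, Complex.ofReal_zero, zero_smul, add_zero,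
      ha.Pproj_apply_of_le i i' (.inl hj), hQ, ptr2, Matrix.of_apply]
    ring
end
end
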